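/- arXiv:2207.06770 — 2 statements merged into one kernel-verified Lean document; each statement's English description precedes it below -/
import Mathlib

section
/- Let g : S¹ → ℂ be a continuous injective map from the unit circle S¹ = {z ∈ ℂ : |z| = 1} whose range γ := g(S¹) is not a circle (there exist no c ∈ ℂ, R > 0 with γ = {z ∈ ℂ : |z − c| = R}). Then there exists δ > 0 such that for every a ∈ ℂ, (sup_{w ∈ γ} |a − w|) − (inf_{w ∈ γ} |a − w|) ≥ δ. -/
/-!
If every point of `γ` were at the same distance from `a`, then `γ` would be a proper subset of a
circle, and a branch of `arg` centred at `a` would embed `γ` continuously and injectively in `ℝ`.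
That is impossible for a Jordan curve: a continuous injection `f` of the circle into `ℝ` maps the
circle minus a third point `q` onto a connected set containing the extreme values of `f`, hence
`f q`. So the gap `spread γ ‖a - ·‖` is positive, and being continuous in `a` it is bounded below
on every ball. Far away, in the direction of a unit vector `u`, the gap differs from the width
`spread γ ⟪u, ·⟫` by at most `M² / (‖a‖ - M)`, where `γ ⊆ closedBall 0 M`. The width is positive
(otherwise `γ` lies on a line, which embeds in `ℝ`) and continuous in `u`, hence bounded below on
the unit circle.
-/

open Complex Metric Set Function

open scoped RealInnerProductSpace

noncomputable def spread {α : Type*} (K : Set α) (f : α → ℝ) : ℝ :=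
  sSup (f '' K) - sInf (f '' K)

section Spread

variable {α : Type*} {K : Set α} {f : α → ℝ}

theorem sub_le_spread (hb : Bornology.IsBounded (f '' K)) {x y : α} (hx : x ∈ K) (hy : y ∈ K) :
    f x - f y ≤ spread K f :=
  sub_le_sub (le_csSup hb.bddAbove (mem_image_of_mem f hx))
    (csInf_le hb.bddBelow (mem_image_of_mem f hy))

theorem spread_pos_of_not_subset (hb : Bornology.IsBounded (f '' K)) {x : α} (hx : x ∈ K)
    (h : ¬ K ⊆ {y | f y = f x}) : 0 < spread K f := by
  obtain ⟨y, hy, hyx⟩ := not_subset.1 h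
  rcases Ne.lt_or_gt hyx with hlt | hlt
  · linarith [sub_le_spread hb hx hy]
  · linarith [sub_le_spread hb hy hx]

variable [TopologicalSpace α]

theorem IsCompact.exists_spread_eq (hK : IsCompact K) (hne : K.Nonempty) (hf : ContinuousOn f K) :
    ∃ x ∈ K, ∃ y ∈ K, spread K f = f x - f y := by
  have hKf := hK.image_of_continuousOn hf
  obtain ⟨x, hx, hxmax⟩ := hKf.sSup_mem (hne.image f)
  obtain ⟨y, hy, hymin⟩ := hKf.sInf_mem (hne.image f)
  exact ⟨x, hx, y, hy, by rw [spread, hxmax, hymin]⟩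

theorem IsCompact.continuous_spread {β : Type*} [TopologicalSpace β] (hK : IsCompact K)
    {f : β → α → ℝ} (hf : Continuous ↿f) : Continuous fun b => spread K (f b) :=
  (hK.continuous_sSup hf).sub (hK.continuous_sInf hf)

end Spread

theorem IsCompact.exists_pos_forall_le {X : Type*} [TopologicalSpace X] {s : Set X}
    (hs : IsCompact s) {F : X → ℝ} (hF : ContinuousOn F s) (hpos : ∀ x ∈ s, 0 < F x) :
    ∃ δ > 0, ∀ x ∈ s, δ ≤ F x := by
  rcases s.eq_empty_or_nonempty with rfl | hne
  · exact ⟨1, one_pos, by simp⟩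
  obtain ⟨x₀, hx₀, hmin⟩ := hs.exists_isMinOn hne hF
  exact ⟨F x₀, hpos x₀ hx₀, hmin⟩

theorem IsCompact.not_injOn_real {X : Type*} [TopologicalSpace X] {S : Set X} (hS : IsCompact S)
    (hinf : S.Infinite) (hconn : ∀ q ∈ S, IsPreconnected (S \ {q})) {f : X → ℝ}
    (hf : ContinuousOn f S) : ¬ InjOn f S := by
  intro hinj
  -- `f q` lies between the extreme values of `f`, which are attained on the connected `S \ {q}`.
  obtain ⟨x, hx, hxmin⟩ := hS.exists_isMinOn hinf.nonempty hf
  obtain ⟨y, hy, hymax⟩ := hS.exists_isMaxOn hinf.nonempty hf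
  obtain ⟨q, hq, hqxy⟩ := (hinf.sdiff (toFinite {x, y})).nonempty
  simp only [mem_insert_iff, mem_singleton_iff, not_or] at hqxy
  have hord := ((hconn q hq).image f (hf.mono sdiff_subset)).ordConnected
  obtain ⟨s, ⟨hs, hsq⟩, hfs⟩ := hord.out (mem_image_of_mem f ⟨hx, Ne.symm hqxy.1⟩)
    (mem_image_of_mem f ⟨hy, Ne.symm hqxy.2⟩) ⟨hxmin hq, hymax hq⟩
  exact hsq (hinj hs hq hfs)

theorem Set.nontrivial_of_forall_not_injOn {X : Type*} [TopologicalSpace X] {K : Set X}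
    (h : ∀ f : X → ℝ, ContinuousOn f K → ¬ InjOn f K) : K.Nontrivial :=
  not_subsingleton_iff.1 fun hK => h 0 continuousOn_const (hK.injOn _)

section InnerProductSpace

variable {E : Type*} [NormedAddCommGroup E] [InnerProductSpace ℝ E]

theorem isConnected_sphere_diff_singleton {v : E} (hv : ‖v‖ = 1) :
    IsConnected (sphere (0 : E) 1 \ {v}) := by
  have : sphere (0 : E) 1 \ {v} = range ((↑) ∘ (stereographic hv).symm) := by
    rw [range_comp, range_stereographic_symm hv]
    ext x; simp [and_comm]
  rw [this]
  exact isConnected_range (continuous_subtype_val.comp (continuous_stereoInvFun hv))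

theorem not_injOn_sphere [ProperSpace E] (hE : 1 < Module.rank ℝ E) {f : E → ℝ}
    (hf : ContinuousOn f (sphere 0 1)) : ¬ InjOn f (sphere 0 1) := by
  have : Nontrivial E := rank_pos_iff_nontrivial.1 (zero_lt_one.trans hE)
  obtain ⟨v, hv⟩ := exists_norm_eq E zero_le_one
  have hv' : v ≠ -v := fun h => by
    have := congrArg norm (sub_eq_zero.2 h)
    rw [sub_neg_eq_add, ← two_smul ℝ, norm_smul, hv] at this
    norm_num at this
  have hinf : (sphere (0 : E) 1).Infinite :=
    (isConnected_sphere hE 0 zero_le_one).isPreconnected.infinite_of_nontrivial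
      ⟨v, by simpa using hv, -v, by simpa using hv, hv'⟩
  exact (isCompact_sphere 0 1).not_injOn_real hinf
    (fun q hq => (isConnected_sphere_diff_singleton (by simpa using hq)).isPreconnected) hf

theorem sub_inner_le_norm_smul_sub {u : E} (hu : ‖u‖ = 1) (t : ℝ) (w : E) :
    t - ⟪u, w⟫ ≤ ‖t • u - w‖ :=
  calc t - ⟪u, w⟫ = ⟪u, t • u - w⟫ := by
        rw [inner_sub_right, real_inner_smul_right, real_inner_self_eq_norm_sq, hu]; ring
    _ ≤ ‖u‖ * ‖t • u - w‖ := real_inner_le_norm _ _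
    _ = ‖t • u - w‖ := by rw [hu, one_mul]

theorem norm_smul_sub_le {u w : E} (hu : ‖u‖ = 1) {t M : ℝ} (hw : ‖w‖ ≤ M) (hMt : M < t) :
    ‖t • u - w‖ ≤ t - ⟪u, w⟫ + M ^ 2 / (t - M) := by
  have hb : |⟪u, w⟫| ≤ M := (abs_real_inner_le_norm u w).trans (by rw [hu, one_mul]; exact hw)
  have hsq : ‖t • u - w‖ ^ 2 = t ^ 2 - 2 * t * ⟪u, w⟫ + ‖w‖ ^ 2 := by
    rw [norm_sub_sq_real, norm_smul, real_inner_smul_left, hu, Real.norm_eq_abs, mul_one, sq_abs]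
    ring
  set q := M ^ 2 / (t - M)
  have hq : q * (t - M) = M ^ 2 := div_mul_cancel₀ _ (sub_pos.2 hMt).ne'
  have hq0 : 0 ≤ q := div_nonneg (sq_nonneg M) (sub_pos.2 hMt).le
  obtain ⟨hb₁, hb₂⟩ := abs_le.1 hb
  -- `‖t • u - w‖² = (t - ⟪u, w⟫)² + ‖w‖² - ⟪u, w⟫²`, and in the square of the right-hand side
  -- the cross term `2 q (t - ⟪u, w⟫) ≥ 2 q (t - M) = 2 M²` absorbs `‖w‖²`.
  refine le_of_pow_le_pow_left₀ two_ne_zero (by linarith) ?_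
  rw [hsq]
  nlinarith [mul_le_mul_of_nonneg_left hb₂ hq0, pow_le_pow_left₀ (norm_nonneg w) hw 2]

theorem spread_inner_sub_le_spread_norm_sub {K : Set E} (hK : IsCompact K) (hne : K.Nonempty)
    {M : ℝ} (hM : ∀ w ∈ K, ‖w‖ ≤ M) {a : E} (ha : M < ‖a‖) :
    spread K (fun w => ⟪‖a‖⁻¹ • a, w⟫) - M ^ 2 / (‖a‖ - M) ≤ spread K fun w => ‖a - w‖ := by
  obtain ⟨w, hw⟩ := hne
  have ha0 : a ≠ 0 := norm_pos_iff.1 (((norm_nonneg w).trans (hM w hw)).trans_lt ha)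
  set u := ‖a‖⁻¹ • a
  have hu : ‖u‖ = 1 := norm_smul_inv_norm ha0
  have hau : ‖a‖ • u = a := smul_inv_smul₀ (norm_ne_zero_iff.2 ha0) a
  obtain ⟨w₁, hw₁, w₀, hw₀, hspread⟩ :=
    hK.exists_spread_eq (f := fun w => ⟪u, w⟫) ⟨w, hw⟩ (by fun_prop)
  have h₀ := sub_inner_le_norm_smul_sub hu ‖a‖ w₀
  have h₁ := norm_smul_sub_le hu (hM w₁ hw₁) ha
  rw [hau] at h₀ h₁
  calc spread K (fun w => ⟪u, w⟫) - M ^ 2 / (‖a‖ - M)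
      = (‖a‖ - ⟪u, w₀⟫) - (‖a‖ - ⟪u, w₁⟫ + M ^ 2 / (‖a‖ - M)) := by
        rw [hspread]; ring
    _ ≤ ‖a - w₀‖ - ‖a - w₁‖ := sub_le_sub h₀ h₁
    _ ≤ spread K fun w => ‖a - w‖ :=
      sub_le_spread (f := fun w => ‖a - w‖)
        (hK.image_of_continuousOn (by fun_prop)).isBounded hw₀ hw₁

theorem exists_forall_le_spread_norm_sub_of_lt_norm {K : Set E} (hK : IsCompact K)
    (hne : K.Nonempty) {ρ : ℝ} (hρ : 0 < ρ)
    (hwidth : ∀ u ∈ sphere (0 : E) 1, ρ ≤ spread K fun w => ⟪u, w⟫) :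
    ∃ R, ∀ a : E, R < ‖a‖ → ρ / 2 ≤ spread K fun w => ‖a - w‖ := by
  obtain ⟨M, hM⟩ := hK.isBounded.exists_norm_le
  have hM0 : 0 ≤ M := (norm_nonneg _).trans (hM _ hne.some_mem)
  refine ⟨M + 2 * M ^ 2 / ρ, fun a ha => ?_⟩
  have hM2 : 0 ≤ 2 * M ^ 2 / ρ := by positivity
  have hMa : M < ‖a‖ := by linarith
  have herr : M ^ 2 / (‖a‖ - M) ≤ ρ / 2 := by
    rw [div_le_iff₀ (sub_pos.2 hMa)]
    have := (div_lt_iff₀' hρ).1 (show 2 * M ^ 2 / ρ < ‖a‖ - M by linarith)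
    linarith
  have hu : ‖a‖⁻¹ • a ∈ sphere (0 : E) 1 := by
    simpa using norm_smul_inv_norm (𝕜 := ℝ) (norm_pos_iff.1 (hM0.trans_lt hMa))
  linarith [hwidth _ hu, spread_inner_sub_le_spread_norm_sub hK hne hM hMa]

end InnerProductSpace

section Complex

variable {K : Set ℂ}

theorem exists_continuousOn_injOn_sphere_diff_singleton {c z₀ : ℂ} {r : ℝ}
    (hz₀ : z₀ ∈ sphere c r) :
    ∃ h : ℂ → ℝ, ContinuousOn h (sphere c r \ {z₀}) ∧ InjOn h (sphere c r \ {z₀}) := by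
  rcases eq_or_ne z₀ c with rfl | hcz
  · have : sphere z₀ r \ {z₀} = ∅ := by
      rw [mem_sphere, dist_self] at hz₀
      rw [← hz₀, sphere_zero, sdiff_self]
    exact ⟨0, by simp [this], by simp [this]⟩
  -- `z ↦ (z - c) / (c - z₀)` maps the punctured circle to the unit circle minus `-1`,
  -- where `arg` is continuous and injective.
  have hr : r ≠ 0 := by
    rw [← mem_sphere_iff_norm.1 hz₀]; exact norm_ne_zero_iff.2 (sub_ne_zero.2 hcz)
  set w : ℂ → ℂ := fun z => (z - c) / (c - z₀)
  have hw : MapsTo w (sphere c r \ {z₀}) (sphere 0 1 \ {-1}) := by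
    rintro z ⟨hz, hzz₀⟩
    refine ⟨?_, fun h => hzz₀ ?_⟩
    · simp_all [w, mem_sphere_iff_norm, norm_sub_rev c z₀]
    · rw [mem_singleton_iff, div_eq_iff (sub_ne_zero.2 hcz.symm)] at h
      exact mem_singleton_iff.2 (by linear_combination h)
  have hslit : sphere 0 1 \ {-1} ⊆ slitPlane :=
    (subset_slitPlane_iff_of_subset_sphere (r := 1) sdiff_subset).2 (by simp)
  refine ⟨arg ∘ w, continuousOn_arg.comp (by fun_prop) (hw.mono_right hslit), ?_⟩
  refine InjOn.comp (fun x hx y hy h => ext_norm_arg ?_ h) ?_ hw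
  · rw [mem_sphere_zero_iff_norm.1 hx.1, mem_sphere_zero_iff_norm.1 hy.1]
  · intro x _ y _ h
    simpa [w, div_left_inj' (sub_ne_zero.2 hcz.symm)] using h

theorem not_subset_sphere (hemb : ∀ h : ℂ → ℝ, ContinuousOn h K → ¬ InjOn h K)
    (hcirc : ∀ c R, 0 < R → K ≠ sphere c R) (c : ℂ) (r : ℝ) : ¬ K ⊆ sphere c r := by
  intro hsub
  rcases le_or_gt r 0 with hr | hr
  · refine (Set.nontrivial_of_forall_not_injOn hemb).not_subsingleton fun x hx y hy => ?_
    have hxc := dist_le_zero.1 ((hsub hx).le.trans hr)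
    have hyc := dist_le_zero.1 ((hsub hy).le.trans hr)
    rw [hxc, hyc]
  obtain ⟨z₀, hz₀, hz₀K⟩ := exists_of_ssubset (hsub.ssubset_of_ne (hcirc c r hr))
  obtain ⟨h, hcont, hinj⟩ := exists_continuousOn_injOn_sphere_diff_singleton hz₀
  have hK : K ⊆ sphere c r \ {z₀} := fun z hz => ⟨hsub hz, fun hzz₀ => hz₀K (hzz₀ ▸ hz)⟩
  exact hemb h (hcont.mono hK) (hinj.mono hK)

theorem not_subset_setOf_inner_eq (hemb : ∀ h : ℂ → ℝ, ContinuousOn h K → ¬ InjOn h K)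
    {u : ℂ} (hu : u ≠ 0) (b : ℝ) : ¬ K ⊆ {w | ⟪u, w⟫ = b} := by
  intro hsub
  refine hemb (fun w => ⟪u * I, w⟫) (by fun_prop) fun z hz z' hz' h => ?_
  have hre : ⟪u, z⟫ = ⟪u, z'⟫ := (hsub hz).trans (hsub hz').symm
  simp only [Complex.inner, map_mul, conj_I, ← mul_assoc, mul_neg, neg_re, mul_I_re,
    neg_inj] at hre h
  exact mul_right_cancel₀ ((map_ne_zero _).2 hu) (Complex.ext hre h)

theorem spread_norm_sub_pos (hK : IsCompact K)
    (hemb : ∀ h : ℂ → ℝ, ContinuousOn h K → ¬ InjOn h K)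
    (hcirc : ∀ c R, 0 < R → K ≠ sphere c R) (a : ℂ) : 0 < spread K fun w => ‖a - w‖ := by
  obtain ⟨x, hx⟩ := (Set.nontrivial_of_forall_not_injOn hemb).nonempty
  refine spread_pos_of_not_subset (hK.image_of_continuousOn (by fun_prop)).isBounded hx
    fun hsub => not_subset_sphere hemb hcirc a ‖a - x‖ fun y hy => ?_
  rw [mem_sphere_iff_norm, norm_sub_rev]
  exact hsub hy

theorem spread_inner_pos (hK : IsCompact K)
    (hemb : ∀ h : ℂ → ℝ, ContinuousOn h K → ¬ InjOn h K) {u : ℂ} (hu : u ≠ 0) :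
    0 < spread K fun w => ⟪u, w⟫ := by
  obtain ⟨x, hx⟩ := (Set.nontrivial_of_forall_not_injOn hemb).nonempty
  exact spread_pos_of_not_subset (hK.image_of_continuousOn (by fun_prop)).isBounded hx
    (not_subset_setOf_inner_eq hemb hu _)

theorem exists_pos_forall_le_spread_norm_sub (hK : IsCompact K)
    (hemb : ∀ h : ℂ → ℝ, ContinuousOn h K → ¬ InjOn h K)
    (hcirc : ∀ c R, 0 < R → K ≠ sphere c R) :
    ∃ δ > 0, ∀ a : ℂ, δ ≤ spread K fun w => ‖a - w‖ := by
  obtain ⟨ρ, hρ, hwidth⟩ := (isCompact_sphere (0 : ℂ) 1).exists_pos_forall_le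
    (hK.continuous_spread continuous_inner).continuousOn
    fun u hu => spread_inner_pos hK hemb (ne_zero_of_mem_unit_sphere ⟨u, hu⟩)
  obtain ⟨R, hfar⟩ := exists_forall_le_spread_norm_sub_of_lt_norm hK
    (Set.nontrivial_of_forall_not_injOn hemb).nonempty hρ hwidth
  obtain ⟨δ, hδ, hnear⟩ := (isCompact_closedBall (0 : ℂ) R).exists_pos_forall_le
    (hK.continuous_spread (continuous_fst.sub continuous_snd).norm).continuousOn
    fun a _ => spread_norm_sub_pos hK hemb hcirc a
  refine ⟨min δ (ρ / 2), lt_min hδ (half_pos hρ), fun a => ?_⟩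
  rcases le_or_gt ‖a‖ R with ha | ha
  · exact (min_le_left _ _).trans (hnear a (mem_closedBall_zero_iff.2 ha))
  · exact (min_le_right _ _).trans (hfar a ha)

end Complex

/-- Positivity of the gap function: if the Jordan curve `γ = g(S¹)` is not a circle,
then there is `δ > 0` such that for every `a ∈ ℂ` the difference between the supremum
and the infimum of `|a − w|` over `w ∈ γ` is at least `δ`. -/
theorem gap_function_positive (g : ℂ → ℂ)
    (hg : ContinuousOn g (sphere (0:ℂ) 1))
    (hinj : InjOn g (sphere (0:ℂ) 1))
    (hnotcircle : ¬ ∃ (c : ℂ) (R : ℝ), 0 < R ∧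
      g '' sphere (0:ℂ) 1 = {z : ℂ | ‖z - c‖ = R}) :
    ∃ δ : ℝ, 0 < δ ∧ ∀ a : ℂ,
      δ ≤ sSup ((fun w => ‖a - w‖) '' (g '' sphere (0:ℂ) 1))
          - sInf ((fun w => ‖a - w‖) '' (g '' sphere (0:ℂ) 1)) := by
  refine exists_pos_forall_le_spread_norm_sub ((isCompact_sphere 0 1).image_of_continuousOn hg)
    (fun h hh hhinj => not_injOn_sphere (by simp) (hh.comp hg (mapsTo_image g _))
      (hhinj.comp hinj (mapsTo_image g _)))
    fun c R hR hK => hnotcircle ⟨c, R, hR, hK.trans ?_⟩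
  ext z
  exact mem_sphere_iff_norm
end

section
/- Let a ∈ ℂ \ {0, 1, 3/2, 2, 3} and u ∈ ℂ \ {0}, and set b = (2a−3)/(a−2) and c = a(a−2)/(2a−3). Consider the rational map Q(z) = u z² (z − a)/(1 − b z), which is holomorphic on ℂ \ {1/b}. Then 0, 1 and c are distinct from the pole 1/b = (a−2)/(2a−3), and for every z ∈ ℂ with z ≠ 1/b one has Q'(z) = 0 if and only if z ∈ {0, 1, c}. -/
open Complex Metric Set Function

/-!
Writing `Q = u N / D` with `N = z²(z - a)` and `D = 1 - b z`, the quotient rule gives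
`N' D - N D' = z (-2 b z² + (3 + a b) z - 2 a)`. The quadratic factor vanishes at `1` exactly when
`b (a - 2) = 2 a - 3`, which is how `b` is chosen; its other root is then `a / b = c`, by Vieta.
-/

section CubicOverLinear

variable {u a b z : ℂ}

theorem hasDerivAt_cubic_div_linear (hz : 1 - b * z ≠ 0) :
    HasDerivAt (fun z => u * z ^ 2 * (z - a) / (1 - b * z))
      (u * z * (-2 * b * z ^ 2 + (3 + a * b) * z - 2 * a) / (1 - b * z) ^ 2) z := by
  have hN := ((hasDerivAt_pow 2 z).const_mul u).mul ((hasDerivAt_id z).sub_const a)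
  have hD := (hasDerivAt_const z (1 : ℂ)).sub ((hasDerivAt_id z).const_mul b)
  refine (hN.div hD hz).congr_deriv ?_
  simp only [Pi.sub_apply, Pi.mul_apply, id]
  ring

theorem critical_quadratic_factor (hab : b * (a - 2) = 2 * a - 3) (hb : b ≠ 0) :
    -2 * b * z ^ 2 + (3 + a * b) * z - 2 * a = -2 * b * (z - 1) * (z - a / b) := by
  field_simp
  linear_combination z * hab

theorem deriv_cubic_div_linear_eq_zero_iff (hu : u ≠ 0) (hb : b ≠ 0)
    (hab : b * (a - 2) = 2 * a - 3) (hz : 1 - b * z ≠ 0) :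
    deriv (fun z => u * z ^ 2 * (z - a) / (1 - b * z)) z = 0 ↔ z = 0 ∨ z = 1 ∨ z = a / b := by
  rw [(hasDerivAt_cubic_div_linear hz).deriv, critical_quadratic_factor hab hb,
    div_eq_zero_iff, or_iff_left (pow_ne_zero 2 hz)]
  have h2b : -2 * b ≠ 0 := mul_ne_zero (by norm_num) hb
  simp only [mul_eq_zero, hu, h2b, sub_eq_zero, false_or]

end CubicOverLinear

/-- Lemma 2.4 (computation): the finite critical points of
`Q_{a,u}(z) = u z² (z−a)/(1−bz)`, `b = (2a−3)/(a−2)`, are exactly `0`, `1` and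
`c = a(a−2)/(2a−3)`, all distinct from the pole `1/b = (a−2)/(2a−3)`. -/
theorem critical_points_of_Q (a u : ℂ)
    (ha : a ∉ ({0, 1, 3/2, 2, 3} : Set ℂ)) (hu : u ≠ 0)
    (b c : ℂ) (hb : b = (2*a - 3)/(a - 2)) (hc : c = a*(a - 2)/(2*a - 3))
    (Q : ℂ → ℂ) (hQ : Q = fun z => u * z ^ 2 * (z - a) / (1 - b * z)) :
    (0 : ℂ) ≠ 1/b ∧ (1 : ℂ) ≠ 1/b ∧ c ≠ 1/b ∧ 1/b = (a - 2)/(2*a - 3) ∧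
    ∀ z : ℂ, z ≠ 1/b → (deriv Q z = 0 ↔ z = 0 ∨ z = 1 ∨ z = c) := by
  simp only [mem_insert_iff, mem_singleton_iff, not_or] at ha
  obtain ⟨-, ha1, ha32, ha2, -⟩ := ha
  have h2 : a - 2 ≠ 0 := sub_ne_zero.mpr ha2
  have h3 : 2 * a - 3 ≠ 0 := fun h => ha32 (by linear_combination h / 2)
  have hb0 : b ≠ 0 := hb ▸ div_ne_zero h3 h2
  have hab : b * (a - 2) = 2 * a - 3 := by rw [hb, div_mul_cancel₀ _ h2]
  have hca : c = a / b := by rw [hc, hb, div_div_eq_mul_div]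
  have hpole : 1 / b = (a - 2) / (2 * a - 3) := by rw [hb, one_div, inv_div]
  have hb1 : b ≠ 1 := fun h => ha1 (by rw [h, one_mul] at hab; linear_combination -hab)
  refine ⟨(one_div_ne_zero hb0).symm, ?_, ?_, hpole, fun z hz => ?_⟩
  · exact fun h => hb1 ((div_eq_one_iff_eq hb0).mp h.symm).symm
  · rwa [hca, ne_eq, div_left_inj' hb0]
  · have hden : 1 - b * z ≠ 0 := fun h =>
      hz (eq_one_div_of_mul_eq_one_right (by linear_combination -h))
    rw [hQ, hca]
    exact deriv_cubic_div_linear_eq_zero_iff hu hb0 hab hden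
end
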